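/- Let D ⊆ ℝ be countable and a_α ∈ ℂ. If ∑_{α∈D} a_α z^α converges absolutely on a nonempty open subset U of ℂ \ {0}, then its sum defines a holomorphic function on {z ∈ U : arg z ≠ 0} (with z^α = e^{α log z} for the branch 0 ≤ arg z < 2π), and the term-wise derivative series ∑_{α∈D} a_α α z^{α-1} converges absolutely and locally uniformly near every point of U to the derivative of this function. -/

import Mathlib

/-!
Since `‖z ^ α‖ = ‖z‖ ^ α`, everything is controlled by the real series `∑ ‖a_α‖ r ^ α`.
Because `U` is open, it contains points of norm `r₁ < ‖z₀‖ < r₂`, where this series converges.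
The factor `|α|` of the differentiated series is absorbed by moving the radius:
`|α| r ^ α ≤ C (r₁ ^ α + r₂ ^ α)` for `r₁ < r < r₂`, as `α e^{-α log (r₂ / r)}` and
`|α| e^{-|α| log (r / r₁)}` are bounded. On an annulus `ρ₁ < ‖z‖ < ρ₂` strictly inside, the
monotonicity bound `r ^ x ≤ ρ₁ ^ x + ρ₂ ^ x` turns this into a summable majorant, so the
Weierstrass M-test gives locally uniform convergence. Off the cut `[0, ∞)` the branch is
`log (-z) + π i`, hence holomorphic, and the derivative of the sum is the uniform limit of the
derivatives of the partial sums.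
-/

/-- The branch of the logarithm with argument in `[0, 2π)`. -/
noncomputable def logBranch (z : ℂ) : ℂ :=
  Real.log ‖z‖ +
    (if 0 ≤ z.arg then (z.arg : ℝ) else z.arg + 2 * Real.pi) * Complex.I

open Filter Topology

namespace Real

lemma rpow_le_rpow_add_rpow_of_mem_Icc {r₁ r r₂ : ℝ} (h₁ : 0 < r₁) (hr : r ∈ Set.Icc r₁ r₂)
    (x : ℝ) : r ^ x ≤ r₁ ^ x + r₂ ^ x := by
  rcases le_total 0 x with hx | hx
  · linarith [rpow_le_rpow (h₁.le.trans hr.1) hr.2 hx, rpow_nonneg h₁.le x]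
  · linarith [rpow_le_rpow_of_nonpos h₁ hr.1 hx, rpow_nonneg (h₁.le.trans (hr.1.trans hr.2)) x]

lemma mul_exp_le_inv_sub_mul_exp {α L L₂ : ℝ} (hL : L < L₂) :
    α * exp (L * α) ≤ (L₂ - L)⁻¹ * exp (L₂ * α) := by
  have hd : 0 < L₂ - L := sub_pos.2 hL
  have hα_le : α ≤ (L₂ - L)⁻¹ * exp ((L₂ - L) * α) := by
    rw [le_inv_mul_iff₀ hd]
    linarith [add_one_le_exp ((L₂ - L) * α)]
  calc α * exp (L * α) ≤ (L₂ - L)⁻¹ * exp ((L₂ - L) * α) * exp (L * α) := by gcongr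
    _ = (L₂ - L)⁻¹ * exp (L₂ * α) := by rw [mul_assoc, ← exp_add]; ring_nf

lemma exists_abs_mul_rpow_le {r₁ r r₂ : ℝ} (h₁ : 0 < r₁) (hr₁ : r₁ < r) (hr₂ : r < r₂) :
    ∃ C, ∀ α : ℝ, |α| * r ^ α ≤ C * (r₁ ^ α + r₂ ^ α) := by
  have hr : 0 < r := h₁.trans hr₁
  refine ⟨(log r₂ - log r)⁻¹ + (log r - log r₁)⁻¹, fun α => ?_⟩
  rw [rpow_def_of_pos hr, rpow_def_of_pos h₁, rpow_def_of_pos (hr.trans hr₂)]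
  have hlog₂ := log_lt_log hr hr₂
  have hlog₁ := log_lt_log h₁ hr₁
  have hC₂ : 0 ≤ (log r₂ - log r)⁻¹ := inv_nonneg.2 (sub_nonneg.2 hlog₂.le)
  have hC₁ : 0 ≤ (log r - log r₁)⁻¹ := inv_nonneg.2 (sub_nonneg.2 hlog₁.le)
  rcases le_total 0 α with hα | hα
  · have := mul_exp_le_inv_sub_mul_exp (α := α) hlog₂
    rw [abs_of_nonneg hα]
    nlinarith [exp_pos (log r₁ * α), exp_pos (log r₂ * α)]
  · have := mul_exp_le_inv_sub_mul_exp (α := -α) (neg_lt_neg hlog₁)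
    rw [abs_of_nonpos hα]
    simp only [neg_mul_neg, neg_sub_neg] at this
    nlinarith [exp_pos (log r₁ * α), exp_pos (log r₂ * α)]

end Real

lemma summable_mul_abs_mul_rpow_sub_one {ι : Type*} {b e : ι → ℝ} (hb : ∀ i, 0 ≤ b i)
    {r₁ r r₂ : ℝ} (h₁ : 0 < r₁) (hr₁ : r₁ < r) (hr₂ : r < r₂)
    (hs₁ : Summable fun i => b i * r₁ ^ e i) (hs₂ : Summable fun i => b i * r₂ ^ e i) :
    Summable fun i => b i * |e i| * r ^ (e i - 1) := by
  have hr : 0 < r := h₁.trans hr₁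
  obtain ⟨C, hC⟩ := Real.exists_abs_mul_rpow_le h₁ hr₁ hr₂
  refine Summable.of_nonneg_of_le
    (fun i => mul_nonneg (mul_nonneg (hb i) (abs_nonneg _)) (Real.rpow_nonneg hr.le _))
    (fun i => ?_) ((hs₁.add hs₂).mul_left (C / r))
  rw [Real.rpow_sub_one hr.ne', mul_assoc, ← mul_div_assoc, ← mul_div_assoc]
  calc b i * (|e i| * r ^ e i) / r ≤ b i * (C * (r₁ ^ e i + r₂ ^ e i)) / r :=
        div_le_div_of_nonneg_right (mul_le_mul_of_nonneg_left (hC _) (hb i)) hr.le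
    _ = C / r * (b i * r₁ ^ e i + b i * r₂ ^ e i) := by ring

section Annulus

variable {E : Type*} [NormedAddCommGroup E] [NormedSpace ℝ E]

lemma exists_mem_norm_lt_norm_lt {U : Set E} {z₀ : E} (hU : U ∈ 𝓝 z₀) (hz₀ : z₀ ≠ 0) :
    ∃ z₁ ∈ U, ∃ z₂ ∈ U, 0 < ‖z₁‖ ∧ ‖z₁‖ < ‖z₀‖ ∧ ‖z₀‖ < ‖z₂‖ := by
  have hr₀ : 0 < ‖z₀‖ := norm_pos_iff.2 hz₀
  have hline : ∀ᶠ t : ℝ in 𝓝 1, t • z₀ ∈ U ∧ 0 < t :=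
    (((continuous_id.smul continuous_const).tendsto' 1 z₀ (one_smul ℝ z₀)).eventually_mem hU).and
      (lt_mem_nhds one_pos)
  obtain ⟨t₁, ⟨ht₁U, ht₁⟩, ht₁_lt⟩ :=
    ((hline.filter_mono nhdsWithin_le_nhds).and (self_mem_nhdsWithin (s := Set.Iio 1))).exists
  obtain ⟨t₂, ⟨ht₂U, ht₂⟩, ht₂_gt⟩ :=
    ((hline.filter_mono nhdsWithin_le_nhds).and (self_mem_nhdsWithin (s := Set.Ioi 1))).exists
  refine ⟨t₁ • z₀, ht₁U, t₂ • z₀, ht₂U, ?_⟩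
  simp only [norm_smul, Real.norm_of_nonneg ht₁.le, Real.norm_of_nonneg ht₂.le]
  exact ⟨by positivity, mul_lt_of_lt_one_left hr₀ ht₁_lt, lt_mul_of_one_lt_left hr₀ ht₂_gt⟩

lemma exists_summable_majorant_abs_mul_norm_rpow_sub_one {ι : Type*} {b e : ι → ℝ}
    (hb : ∀ i, 0 ≤ b i) {U : Set E} (hU : IsOpen U)
    (habs : ∀ z ∈ U, Summable fun i => b i * ‖z‖ ^ e i) {z₀ : E} (hz₀U : z₀ ∈ U)
    (hz₀ : z₀ ≠ 0) :
    ∃ V : Set E, IsOpen V ∧ z₀ ∈ V ∧ V ⊆ U ∧ ∃ u : ι → ℝ, Summable u ∧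
      ∀ i, ∀ z ∈ V, b i * |e i| * ‖z‖ ^ (e i - 1) ≤ u i := by
  obtain ⟨z₁, hz₁U, z₂, hz₂U, hz₁, hz₁_lt, hz₂_gt⟩ :=
    exists_mem_norm_lt_norm_lt (hU.mem_nhds hz₀U) hz₀
  obtain ⟨r₁, hz₁r₁, hr₁z₀⟩ := exists_between hz₁_lt
  obtain ⟨r₂, hz₀r₂, hr₂z₂⟩ := exists_between hz₂_gt
  have hr₁ : 0 < r₁ := hz₁.trans hz₁r₁
  have hs : ∀ r, r₁ ≤ r → r ≤ r₂ → Summable fun i => b i * |e i| * r ^ (e i - 1) :=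
    fun r h₁ h₂ => summable_mul_abs_mul_rpow_sub_one hb hz₁ (by linarith) (by linarith)
      (habs z₁ hz₁U) (habs z₂ hz₂U)
  refine ⟨U ∩ norm ⁻¹' Set.Ioo r₁ r₂,
    hU.inter (isOpen_Ioo.preimage continuous_norm), ⟨hz₀U, hr₁z₀, hz₀r₂⟩,
    Set.inter_subset_left, _, (hs r₁ le_rfl (by linarith)).add (hs r₂ (by linarith) le_rfl),
    fun i z hz => ?_⟩
  rw [← mul_add]
  exact mul_le_mul_of_nonneg_left
    (Real.rpow_le_rpow_add_rpow_of_mem_Icc hr₁ (Set.Ioo_subset_Icc_self hz.2) _)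
    (mul_nonneg (hb i) (abs_nonneg _))

end Annulus

section LogBranch

open Complex
open scoped Real

lemma neg_mem_slitPlane_iff_arg_ne_zero {z : ℂ} : -z ∈ slitPlane ↔ z.arg ≠ 0 := by
  simp only [mem_slitPlane_iff, ne_eq, arg_eq_zero_iff, neg_re, neg_im, neg_pos, neg_eq_zero,
    not_and_or, not_le]

lemma exp_logBranch {z : ℂ} (hz : z ≠ 0) : exp (logBranch z) = z := by
  rw [logBranch, exp_add, ← ofReal_exp, Real.exp_log (norm_pos_iff.2 hz)]
  split_ifs
  · exact norm_mul_exp_arg_mul_I z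
  · rw [ofReal_add, add_mul, exp_add, ofReal_mul, ofReal_ofNat, exp_two_pi_mul_I, mul_one,
      norm_mul_exp_arg_mul_I]

lemma norm_exp_ofReal_mul_logBranch (s : ℝ) {z : ℂ} (hz : z ≠ 0) :
    ‖exp (s * logBranch z)‖ = ‖z‖ ^ s := by
  rw [norm_exp, Real.rpow_def_of_pos (norm_pos_iff.2 hz), mul_comm (Real.log _)]
  simp [logBranch]

lemma logBranch_eq_log_neg_add_pi_mul_I {z : ℂ} (hz : z.arg ≠ 0) :
    logBranch z = log (-z) + π * I := by
  apply Complex.ext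
  · simp [logBranch, log_re]
  · simp only [logBranch, log_im, add_im, ofReal_im, mul_im, ofReal_re, I_re, I_im, mul_zero,
      mul_one, zero_add, add_zero]
    rcases lt_trichotomy z.im 0 with him | him | him
    · rw [if_neg (arg_neg_iff.2 him).not_ge, arg_neg_eq_arg_add_pi_of_im_neg him]
      ring
    · have hre : z.re < 0 := by
        by_contra! hre
        exact hz (arg_eq_zero_iff.2 ⟨hre, him⟩)
      rw [arg_eq_pi_iff.2 ⟨hre, him⟩, if_pos Real.pi_pos.le,
        arg_eq_zero_iff.2 ⟨by simpa using hre.le, by simpa using him⟩, zero_add]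
    · rw [if_pos (arg_nonneg_iff.2 him.le), arg_neg_eq_arg_sub_pi_of_im_pos him]
      ring

lemma hasDerivAt_mul_exp_mul_logBranch (c s : ℂ) {z : ℂ} (hz : -z ∈ slitPlane) :
    HasDerivAt (fun w => c * exp (s * logBranch w)) (c * s * exp ((s - 1) * logBranch z)) z := by
  have hz₀ : z ≠ 0 := by rintro rfl; simp at hz
  have hlog : HasDerivAt (fun w => log (-w) + π * I) z⁻¹ z := by
    simpa using ((hasDerivAt_log hz).comp z (hasDerivAt_neg z)).add_const (π * I : ℂ)
  have heq : (fun w => log (-w) + π * I) =ᶠ[𝓝 z] logBranch :=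
    ((isOpen_slitPlane.preimage continuous_neg).eventually_mem hz).mono fun w hw =>
      (logBranch_eq_log_neg_add_pi_mul_I (neg_mem_slitPlane_iff_arg_ne_zero.1 hw)).symm
  refine ((((hlog.congr_of_eventuallyEq heq.symm).const_mul s).cexp).const_mul c).congr_deriv ?_
  rw [sub_mul, one_mul, exp_sub, exp_logBranch hz₀]
  ring

lemma norm_mul_ofReal_mul_exp_sub_one_mul_logBranch (c : ℂ) (s : ℝ) {z : ℂ} (hz : z ≠ 0) :
    ‖c * s * exp ((s - 1) * logBranch z)‖ = ‖c‖ * |s| * ‖z‖ ^ (s - 1) := by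
  rw [norm_mul, norm_mul, norm_real, Real.norm_eq_abs, ← norm_exp_ofReal_mul_logBranch _ hz,
    ofReal_sub, ofReal_one]

end LogBranch

section PowerSeries

variable {ι : Type*} {c : ι → ℂ} {e : ι → ℝ} {U : Set ℂ}

open Complex

lemma exists_tendstoUniformlyOn_tsum_deriv (hU : IsOpen U) (hU0 : (0 : ℂ) ∉ U)
    (habs : ∀ z ∈ U, Summable fun i => ‖c i‖ * ‖z‖ ^ e i) {z₀ : ℂ} (hz₀ : z₀ ∈ U) :
    ∃ V : Set ℂ, IsOpen V ∧ z₀ ∈ V ∧ V ⊆ U ∧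
      TendstoUniformlyOn
        (fun (s : Finset ι) z => ∑ i ∈ s, c i * e i * exp ((e i - 1) * logBranch z))
        (fun z => ∑' i, c i * e i * exp ((e i - 1) * logBranch z)) atTop V := by
  obtain ⟨V, hV, hz₀V, hVU, u, hu, hle⟩ := exists_summable_majorant_abs_mul_norm_rpow_sub_one
    (fun i => norm_nonneg (c i)) hU habs hz₀ (ne_of_mem_of_not_mem hz₀ hU0)
  refine ⟨V, hV, hz₀V, hVU, tendstoUniformlyOn_tsum hu fun i z hz => ?_⟩
  rw [norm_mul_ofReal_mul_exp_sub_one_mul_logBranch _ _ (ne_of_mem_of_not_mem (hVU hz) hU0)]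
  exact hle i z hz

lemma hasDerivAt_tsum_mul_exp_mul_logBranch (hU : IsOpen U) (hU0 : (0 : ℂ) ∉ U)
    (habs : ∀ z ∈ U, Summable fun i => ‖c i‖ * ‖z‖ ^ e i) {z : ℂ} (hz : z ∈ U)
    (harg : z.arg ≠ 0) :
    HasDerivAt (fun w => ∑' i, c i * exp (e i * logBranch w))
      (∑' i, c i * e i * exp ((e i - 1) * logBranch z)) z := by
  obtain ⟨V, hV, hzV, hVU, hconv⟩ := exists_tendstoUniformlyOn_tsum_deriv hU hU0 habs hz
  refine hasDerivAt_of_tendstoUniformlyOn (hV.inter (isOpen_slitPlane.preimage continuous_neg))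
    (hconv.mono Set.inter_subset_left)
    (Eventually.of_forall fun s w hw =>
      HasDerivAt.sum fun i _ => hasDerivAt_mul_exp_mul_logBranch _ _ hw.2)
    (fun w hw => ?_) ⟨hzV, neg_mem_slitPlane_iff_arg_ne_zero.2 harg⟩
  have hw₀ := ne_of_mem_of_not_mem (hVU hw.1) hU0
  have hsum : Summable fun i => c i * exp (e i * logBranch w) :=
    .of_norm <| (habs w (hVU hw.1)).congr fun i => by
      rw [norm_mul, norm_exp_ofReal_mul_logBranch _ hw₀]
  simp only [Finset.sum_apply]
  exact hsum.hasSum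

end PowerSeries

theorem stmt_14_general (D : Set ℝ) (a : ℝ → ℂ)
    (U : Set ℂ) (hU : IsOpen U) (hU0 : (0 : ℂ) ∉ U)
    (habs : ∀ z ∈ U, Summable fun α : D => ‖a (α : ℝ)‖ * ‖z‖ ^ (α : ℝ)) :
    (∀ z ∈ U, Summable fun α : D =>
      ‖a (α : ℝ)‖ * |(α : ℝ)| * ‖z‖ ^ ((α : ℝ) - 1)) ∧
    (∀ z₀ ∈ U, ∃ V : Set ℂ, IsOpen V ∧ z₀ ∈ V ∧ V ⊆ U ∧
      TendstoUniformlyOn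
        (fun (s : Finset D) (z : ℂ) =>
          ∑ α ∈ s, a (α : ℝ) * (α : ℝ) * Complex.exp ((((α : ℝ) : ℂ) - 1) * logBranch z))
        (fun z : ℂ => ∑' α : D,
          a (α : ℝ) * (α : ℝ) * Complex.exp ((((α : ℝ) : ℂ) - 1) * logBranch z))
        Filter.atTop V) ∧
    (∀ z ∈ U, Complex.arg z ≠ 0 →
      HasDerivAt
        (fun w : ℂ => ∑' α : D, a (α : ℝ) * Complex.exp (((α : ℝ) : ℂ) * logBranch w))
        (∑' α : D,
          a (α : ℝ) * (α : ℝ) * Complex.exp ((((α : ℝ) : ℂ) - 1) * logBranch z)) z) := by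
  refine ⟨fun z hz => ?_, fun z₀ => exists_tendstoUniformlyOn_tsum_deriv hU hU0 habs,
    fun z => hasDerivAt_tsum_mul_exp_mul_logBranch hU hU0 habs⟩
  obtain ⟨V, -, hzV, -, u, hu, hle⟩ := exists_summable_majorant_abs_mul_norm_rpow_sub_one
    (fun α : D => norm_nonneg (a α)) hU habs hz (ne_of_mem_of_not_mem hz hU0)
  exact hu.of_nonneg_of_le (fun α => by positivity) (hle · z hzV)

/-- if `∑_{α∈D} a_α z^α` (real exponents, `z^α = e^{α Log z}` for the
branch with argument in `[0,2π)`) converges absolutely on a nonempty open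
`U ⊆ ℂ \ {0}`, then: the term-wise differentiated series converges absolutely on `U`
and locally uniformly near every point of `U`, and the sum function is holomorphic on
`{z ∈ U : arg z ≠ 0}` with derivative given by the term-wise differentiated series. -/
theorem stmt_14 (D : Set ℝ) (hD : D.Countable) (a : ℝ → ℂ)
    (U : Set ℂ) (hU : IsOpen U) (hUne : U.Nonempty) (hU0 : (0 : ℂ) ∉ U)
    (habs : ∀ z ∈ U, Summable fun α : D => ‖a (α : ℝ)‖ * ‖z‖ ^ (α : ℝ)) :
    (∀ z ∈ U, Summable fun α : D =>
      ‖a (α : ℝ)‖ * |(α : ℝ)| * ‖z‖ ^ ((α : ℝ) - 1)) ∧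
    (∀ z₀ ∈ U, ∃ V : Set ℂ, IsOpen V ∧ z₀ ∈ V ∧ V ⊆ U ∧
      TendstoUniformlyOn
        (fun (s : Finset D) (z : ℂ) =>
          ∑ α ∈ s, a (α : ℝ) * (α : ℝ) * Complex.exp ((((α : ℝ) : ℂ) - 1) * logBranch z))
        (fun z : ℂ => ∑' α : D,
          a (α : ℝ) * (α : ℝ) * Complex.exp ((((α : ℝ) : ℂ) - 1) * logBranch z))
        Filter.atTop V) ∧
    (∀ z ∈ U, Complex.arg z ≠ 0 →
      HasDerivAt
        (fun w : ℂ => ∑' α : D, a (α : ℝ) * Complex.exp (((α : ℝ) : ℂ) * logBranch w))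
        (∑' α : D,
          a (α : ℝ) * (α : ℝ) * Complex.exp ((((α : ℝ) : ℂ) - 1) * logBranch z)) z) :=
  stmt_14_general D a U hU hU0 habs
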